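/- Let n_x, n_y be coprime positive integers and φ_x, φ_y real numbers such that n_y·φ_x − n_x·φ_y is not an integer multiple of π. Among the pairs (t₁, t₂) with 0 ≤ t₁ < t₂ < 2π, cos(n_x t₁ + φ_x) = cos(n_x t₂ + φ_x), and cos(n_y t₁ + φ_y) = cos(n_y t₂ + φ_y): exactly n_x·n_y − n_y of them satisfy n_x(t₂ − t₁) ∈ 2πℤ (the Type I double points), exactly n_x·n_y − n_x of them satisfy n_y(t₂ − t₁) ∈ 2πℤ (the Type II double points), and every such pair is of exactly one of these two kinds. -/

import Mathlib

/-!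
Since `cos α = cos β` iff `β - α` or `α + β` lies in `2πℤ`, each coordinate of a double point
`(t₁, t₂)` satisfies a difference condition `n (t₂ - t₁) ∈ 2πℤ` or a sum condition
`n (t₁ + t₂) + 2φ ∈ 2πℤ`. The two difference conditions together give `t₂ - t₁ ∈ 2πℤ` by
Bézout, which is impossible for `0 < t₂ - t₁ < 2π`; the two sum conditions together give
`n_y φ_x - n_x φ_y ∈ πℤ`. Hence every double point is of Type I (x-difference, y-sum) or of
Type II (the same with the roles of x and y swapped), and never both.

A Type I point is determined by the integers `a = n_x (t₂ - t₁) / 2π` and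
`m = (n_y (t₁ + t₂) + 2φ_y) / 2π`, and `0 ≤ t₁ < t₂ < 2π` says exactly `0 < a` and
`L a ≤ m < n_y + L (n_x - a)` with `L a = n_y a / n_x + φ_y / π`. So for each `1 ≤ a < n_x` there
are `n_y + ⌈L (n_x - a)⌉ - ⌈L a⌉` values of `m`, and summing over `a` the ceilings cancel under
`a ↦ n_x - a`, leaving `(n_x - 1) n_y`.
-/

open Real

namespace Finset

theorem sum_Ico_one_reflect {M : Type*} [AddCommMonoid M] (g : ℤ → M) (n : ℤ) :
    ∑ a ∈ Ico 1 n, g (n - a) = ∑ a ∈ Ico 1 n, g a :=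
  sum_equiv (Equiv.subLeft n) (fun a => by simp only [mem_Ico, Equiv.subLeft_apply]; omega)
    (fun _ _ => rfl)

theorem sum_card_Ico_ceil_reflect (f : ℤ → ℝ) (n k : ℕ)
    (hf : ∀ a ∈ Ico (1 : ℤ) n, f a ≤ k + f (n - a)) :
    ∑ a ∈ Ico (1 : ℤ) n, #(Ico ⌈f a⌉ ⌈k + f (n - a)⌉) = (n - 1) * k := by
  have hterm : ∀ a ∈ Ico (1 : ℤ) n,
      (#(Ico ⌈f a⌉ ⌈k + f (n - a)⌉) : ℤ) = k + ⌈f (n - a)⌉ - ⌈f a⌉ := by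
    intro a ha
    have := Int.ceil_mono (hf a ha)
    rw [Int.ceil_natCast_add] at this ⊢
    rw [Int.card_Ico, Int.toNat_of_nonneg (by omega)]
  zify
  rw [sum_congr rfl hterm, sum_sub_distrib, sum_add_distrib, sum_Ico_one_reflect (fun a => ⌈f a⌉)]
  simp only [sum_const, Int.card_Ico, nsmul_eq_mul, add_sub_cancel_right]
  congr 1
  omega

end Finset

namespace Lissajous

open Finset

def DiffResonant (ω : ℝ) (p : ℝ × ℝ) : Prop :=
  ∃ k : ℤ, ω * (p.2 - p.1) = k * (2 * π)

def SumResonant (ω φ : ℝ) (p : ℝ × ℝ) : Prop :=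
  ∃ k : ℤ, ω * (p.1 + p.2) + 2 * φ = k * (2 * π)

theorem cos_eq_cos_iff_diffResonant_or_sumResonant (ω φ : ℝ) (p : ℝ × ℝ) :
    cos (ω * p.1 + φ) = cos (ω * p.2 + φ) ↔ DiffResonant ω p ∨ SumResonant ω φ p := by
  rw [Real.cos_eq_cos_iff, DiffResonant, SumResonant, ← exists_or]
  refine exists_congr fun k => or_congr ?_ ?_ <;> constructor <;> intro h <;> linarith

theorem exists_int_mul_eq_of_coprime {m n : ℕ} (hmn : m.Coprime n) {d T : ℝ} {a b : ℤ}
    (ha : m * d = a * T) (hb : n * d = b * T) : ∃ k : ℤ, d = k * T := by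
  obtain ⟨u, v, huv⟩ := Nat.isCoprime_iff_coprime.mpr hmn
  have huv' : (u : ℝ) * m + v * n = 1 := by exact_mod_cast huv
  refine ⟨u * a + v * b, ?_⟩
  push_cast
  linear_combination (-huv') * d + u * ha + v * hb

theorem not_diffResonant_and_diffResonant {m n : ℕ} (hmn : m.Coprime n) {p : ℝ × ℝ}
    (hlt : p.1 < p.2) (hlt' : p.2 - p.1 < 2 * π) :
    ¬ (DiffResonant m p ∧ DiffResonant n p) := by
  rintro ⟨⟨a, ha⟩, ⟨b, hb⟩⟩
  obtain ⟨k, hk⟩ := exists_int_mul_eq_of_coprime hmn ha hb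
  have hk0 : (0 : ℝ) < k := pos_of_mul_pos_left (hk ▸ sub_pos.mpr hlt) two_pi_pos.le
  have hk1 : (k : ℝ) < 1 := (mul_lt_iff_lt_one_left two_pi_pos).mp (hk ▸ hlt')
  have : (0 : ℤ) < k := by exact_mod_cast hk0
  have : k < 1 := by exact_mod_cast hk1
  omega

theorem not_sumResonant_and_sumResonant {nx ny : ℕ} {φx φy : ℝ}
    (hphase : ¬ ∃ l : ℤ, (ny : ℝ) * φx - (nx : ℝ) * φy = l * π) {p : ℝ × ℝ} :
    ¬ (SumResonant nx φx p ∧ SumResonant ny φy p) := by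
  rintro ⟨⟨k, hk⟩, ⟨k', hk'⟩⟩
  refine hphase ⟨k * ny - k' * nx, ?_⟩
  push_cast
  linear_combination (ny * hk - nx * hk') / 2

def IsDoublePoint (nx ny : ℕ) (φx φy : ℝ) (p : ℝ × ℝ) : Prop :=
  0 ≤ p.1 ∧ p.1 < p.2 ∧ p.2 < 2 * π ∧
    cos (nx * p.1 + φx) = cos (nx * p.2 + φx) ∧ cos (ny * p.1 + φy) = cos (ny * p.2 + φy)

theorem isDoublePoint_comm {nx ny : ℕ} {φx φy : ℝ} {p : ℝ × ℝ} :
    IsDoublePoint nx ny φx φy p ↔ IsDoublePoint ny nx φy φx p := by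
  simp only [IsDoublePoint, and_comm (a := cos (nx * p.1 + φx) = _)]

def typeIPoints (nx ny : ℕ) (φy : ℝ) : Set (ℝ × ℝ) :=
  {p | 0 ≤ p.1 ∧ p.1 < p.2 ∧ p.2 < 2 * π ∧ DiffResonant nx p ∧ SumResonant ny φy p}

theorem isDoublePoint_and_diffResonant_iff {nx ny : ℕ} (hcop : nx.Coprime ny) {φx φy : ℝ}
    {p : ℝ × ℝ} : IsDoublePoint nx ny φx φy p ∧ DiffResonant nx p ↔ p ∈ typeIPoints nx ny φy := by
  simp only [IsDoublePoint, typeIPoints, Set.mem_ofPred_eq,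
    cos_eq_cos_iff_diffResonant_or_sumResonant]
  constructor
  · rintro ⟨⟨h0, hlt, h2π, -, hy⟩, hx⟩
    refine ⟨h0, hlt, h2π, hx, hy.resolve_left fun hy => ?_⟩
    exact not_diffResonant_and_diffResonant hcop hlt (by linarith) ⟨hx, hy⟩
  · rintro ⟨h0, hlt, h2π, hx, hy⟩
    exact ⟨⟨h0, hlt, h2π, .inl hx, .inr hy⟩, hx⟩

theorem IsDoublePoint.diffResonant_xor {nx ny : ℕ} (hcop : nx.Coprime ny) {φx φy : ℝ}
    (hphase : ¬ ∃ l : ℤ, (ny : ℝ) * φx - (nx : ℝ) * φy = l * π) {p : ℝ × ℝ}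
    (hp : IsDoublePoint nx ny φx φy p) :
    Xor (DiffResonant nx p) (DiffResonant ny p) := by
  obtain ⟨h0, hlt, h2π, hx, hy⟩ := hp
  rw [cos_eq_cos_iff_diffResonant_or_sumResonant] at hx hy
  have hdiff := not_diffResonant_and_diffResonant hcop hlt (by linarith)
  have hsum := not_sumResonant_and_sumResonant hphase (p := p)
  unfold Xor
  tauto

noncomputable def typeIPoint (nx ny : ℕ) (φy : ℝ) (q : ℤ × ℤ) : ℝ × ℝ :=
  ((π * q.2 - φy) / ny - π * q.1 / nx, (π * q.2 - φy) / ny + π * q.1 / nx)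

noncomputable def typeILower (nx ny : ℕ) (φy : ℝ) (a : ℤ) : ℝ := ny * a / nx + φy / π

noncomputable def typeIIndex (nx ny : ℕ) (φy : ℝ) : Finset (ℤ × ℤ) :=
  (Ico 1 (nx : ℤ)).biUnion fun a =>
    (Ico ⌈typeILower nx ny φy a⌉ ⌈ny + typeILower nx ny φy (nx - a)⌉).image (a, ·)

section
variable {nx ny : ℕ} (φy : ℝ)

theorem typeIPoint_eq_iff (hnx : 0 < nx) (hny : 0 < ny) {a m : ℤ} {p : ℝ × ℝ} :
    typeIPoint nx ny φy (a, m) = p ↔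
      nx * (p.2 - p.1) = a * (2 * π) ∧ ny * (p.1 + p.2) + 2 * φy = m * (2 * π) := by
  obtain ⟨x, y⟩ := p
  simp only [typeIPoint, Prod.mk.injEq]
  constructor
  · rintro ⟨rfl, rfl⟩
    constructor <;> field_simp <;> ring
  · rintro ⟨ha, hm⟩
    constructor
    · field_simp
      linear_combination (ny * ha - nx * hm) / 2
    · field_simp
      linear_combination (-ny * ha - nx * hm) / 2

theorem typeIPoint_injective (hnx : 0 < nx) (hny : 0 < ny) :
    Function.Injective (typeIPoint nx ny φy) := by
  rintro ⟨a, m⟩ ⟨a', m'⟩ h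
  obtain ⟨ha, hm⟩ := (typeIPoint_eq_iff φy hnx hny).mp h
  obtain ⟨ha', hm'⟩ := (typeIPoint_eq_iff φy hnx hny (a := a') (m := m')).mp rfl
  have h2π : 2 * π ≠ 0 := two_pi_pos.ne'
  rw [Prod.mk.injEq]
  exact ⟨by exact_mod_cast mul_right_cancel₀ h2π (ha.symm.trans ha'),
    by exact_mod_cast mul_right_cancel₀ h2π (hm.symm.trans hm')⟩

theorem typeILower_lt_iff (hnx : 0 < nx) (hny : 0 < ny) {a : ℤ} :
    typeILower nx ny φy a < ny + typeILower nx ny φy (nx - a) ↔ a < nx := by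
  have hgap : ny + typeILower nx ny φy (nx - a) - typeILower nx ny φy a =
      2 * ny / nx * (nx - a) := by
    simp only [typeILower]
    push_cast
    field_simp
    ring
  rw [← sub_pos, hgap, mul_pos_iff_of_pos_left (by positivity), sub_pos]
  norm_cast

theorem typeIPoint_mem_typeIPoints_iff (hnx : 0 < nx) (hny : 0 < ny) {q : ℤ × ℤ} :
    typeIPoint nx ny φy q ∈ typeIPoints nx ny φy ↔ 0 < q.1 ∧
      typeILower nx ny φy q.1 ≤ q.2 ∧ q.2 < ny + typeILower nx ny φy (nx - q.1) := by
  obtain ⟨a, m⟩ := q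
  set p := typeIPoint nx ny φy (a, m)
  obtain ⟨hdiff, hsum⟩ := (typeIPoint_eq_iff φy hnx hny).mp (rfl : typeIPoint nx ny φy (a, m) = p)
  have hfst : p.1 = π / ny * (m - typeILower nx ny φy a) := by
    simp only [p, typeIPoint, typeILower]
    field_simp
    ring
  have hsnd : 2 * π - p.2 = π / ny * (ny + typeILower nx ny φy (nx - a) - m) := by
    simp only [p, typeIPoint, typeILower]
    push_cast
    field_simp
    ring
  have hsub : p.2 - p.1 = 2 * π / nx * a := by
    simp only [p, typeIPoint]
    ring
  have h0 : 0 ≤ p.1 ↔ typeILower nx ny φy a ≤ m := by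
    rw [hfst, mul_nonneg_iff_of_pos_left (by positivity), sub_nonneg]
  have hlt : p.1 < p.2 ↔ 0 < a := by
    rw [← sub_pos, hsub, mul_pos_iff_of_pos_left (by positivity), Int.cast_pos]
  have h2π : p.2 < 2 * π ↔ m < ny + typeILower nx ny φy (nx - a) := by
    rw [← sub_pos, hsnd, mul_pos_iff_of_pos_left (by positivity), sub_pos]
  simp only [typeIPoints, Set.mem_ofPred_eq, h0, hlt, h2π]
  exact ⟨fun h => ⟨h.2.1, h.1, h.2.2.1⟩, fun h => ⟨h.2.1, h.1, h.2.2, ⟨a, hdiff⟩, ⟨m, hsum⟩⟩⟩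

theorem mem_typeIIndex {q : ℤ × ℤ} :
    q ∈ typeIIndex nx ny φy ↔ 1 ≤ q.1 ∧ q.1 < nx ∧
      typeILower nx ny φy q.1 ≤ q.2 ∧ q.2 < ny + typeILower nx ny φy (nx - q.1) := by
  obtain ⟨a, m⟩ := q
  simp only [typeIIndex, mem_biUnion, mem_image, mem_Ico, Prod.mk.injEq, Int.ceil_le, Int.lt_ceil]
  constructor
  · rintro ⟨a, ha, m, hm, rfl, rfl⟩
    exact ⟨ha.1, ha.2, hm⟩
  · rintro ⟨h1, h2, hm⟩
    exact ⟨a, ⟨h1, h2⟩, m, hm, rfl, rfl⟩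

theorem typeIPoints_eq_image (hnx : 0 < nx) (hny : 0 < ny) :
    typeIPoints nx ny φy = typeIPoint nx ny φy '' typeIIndex nx ny φy := by
  ext p
  constructor
  · intro hp
    obtain ⟨⟨a, hdiff⟩, ⟨m, hsum⟩⟩ := hp.2.2.2
    obtain rfl := (typeIPoint_eq_iff φy hnx hny).mpr ⟨hdiff, hsum⟩
    obtain ⟨hpos, hlo, hhi⟩ := (typeIPoint_mem_typeIPoints_iff φy hnx hny).mp hp
    exact ⟨(a, m), (mem_typeIIndex φy).mpr
      ⟨hpos, (typeILower_lt_iff φy hnx hny).mp (hlo.trans_lt hhi), hlo, hhi⟩, rfl⟩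
  · rintro ⟨⟨a, m⟩, hq, rfl⟩
    obtain ⟨h1, -, hlo, hhi⟩ := (mem_typeIIndex φy).mp hq
    exact (typeIPoint_mem_typeIPoints_iff φy hnx hny).mpr ⟨h1, hlo, hhi⟩

theorem card_typeIIndex (hnx : 0 < nx) (hny : 0 < ny) :
    #(typeIIndex nx ny φy) = (nx - 1) * ny := by
  have hdisj : (Ico 1 (nx : ℤ) : Set ℤ).PairwiseDisjoint fun a =>
      (Ico ⌈typeILower nx ny φy a⌉ ⌈ny + typeILower nx ny φy (nx - a)⌉).image (a, ·) := by
    intro a _ b _ hab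
    simp only [Function.onFun, disjoint_left, mem_image]
    rintro _ ⟨m, -, rfl⟩ ⟨m', -, h⟩
    exact hab (congrArg Prod.fst h).symm
  rw [typeIIndex, card_biUnion hdisj]
  simp only [card_image_of_injective _ (Prod.mk_right_injective _)]
  exact sum_card_Ico_ceil_reflect _ nx ny fun a ha =>
    ((typeILower_lt_iff φy hnx hny).mpr (mem_Ico.mp ha).2).le

theorem typeIPoints_finite (hnx : 0 < nx) (hny : 0 < ny) : (typeIPoints nx ny φy).Finite := by
  rw [typeIPoints_eq_image φy hnx hny]
  exact (typeIIndex nx ny φy).finite_toSet.image _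

theorem ncard_typeIPoints (hnx : 0 < nx) (hny : 0 < ny) :
    (typeIPoints nx ny φy).ncard = (nx - 1) * ny := by
  rw [typeIPoints_eq_image φy hnx hny,
    Set.ncard_image_of_injective _ (typeIPoint_injective φy hnx hny), Set.ncard_coe_finset,
    card_typeIIndex φy hnx hny]

end

end Lissajous

open Lissajous in
theorem lissajous_double_points_type_counts
    (nx ny : ℕ) (hnx : 0 < nx) (hny : 0 < ny) (hcop : Nat.Coprime nx ny)
    (φx φy : ℝ) (hphase : ¬ ∃ l : ℤ, (ny : ℝ) * φx - (nx : ℝ) * φy = l * π)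
    (S : Set (ℝ × ℝ))
    (hS : S = {p : ℝ × ℝ | 0 ≤ p.1 ∧ p.1 < p.2 ∧ p.2 < 2 * π ∧
      Real.cos (nx * p.1 + φx) = Real.cos (nx * p.2 + φx) ∧
      Real.cos (ny * p.1 + φy) = Real.cos (ny * p.2 + φy)})
    (TypeI TypeII : ℝ × ℝ → Prop)
    (hTI : ∀ p, TypeI p ↔ ∃ l : ℤ, (nx : ℝ) * (p.2 - p.1) = l * (2 * π))
    (hTII : ∀ p, TypeII p ↔ ∃ l : ℤ, (ny : ℝ) * (p.2 - p.1) = l * (2 * π)) :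
    {p ∈ S | TypeI p}.Finite ∧ {p ∈ S | TypeI p}.ncard = nx * ny - ny ∧
    {p ∈ S | TypeII p}.Finite ∧ {p ∈ S | TypeII p}.ncard = nx * ny - nx ∧
    ∀ p ∈ S, (TypeI p ∧ ¬ TypeII p) ∨ (TypeII p ∧ ¬ TypeI p) := by
  have hS' : ∀ p, p ∈ S ↔ IsDoublePoint nx ny φx φy p := fun p => by rw [hS]; rfl
  have hI : {p ∈ S | TypeI p} = typeIPoints nx ny φy := by
    ext p
    rw [Set.mem_sep_iff, hS', hTI]
    exact isDoublePoint_and_diffResonant_iff hcop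
  have hII : {p ∈ S | TypeII p} = typeIPoints ny nx φx := by
    ext p
    rw [Set.mem_sep_iff, hS', hTII, isDoublePoint_comm]
    exact isDoublePoint_and_diffResonant_iff hcop.symm
  refine ⟨hI ▸ typeIPoints_finite φy hnx hny, ?_, hII ▸ typeIPoints_finite φx hny hnx, ?_, ?_⟩
  · rw [hI, ncard_typeIPoints φy hnx hny, Nat.sub_one_mul]
  · rw [hII, ncard_typeIPoints φx hny hnx, Nat.sub_one_mul, Nat.mul_comm]
  · intro p hp
    simp only [hTI, hTII]
    exact ((hS' p).mp hp).diffResonant_xor hcop hphase
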